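/- arXiv:2407.02191 — 3 statements merged into one kernel-verified Lean document; each statement's English description precedes it below -/
import Mathlib

section
/- If (P, Q) is a dominating pair for a mechanism M, i.e., for every ε ∈ ℝ the hockey-stick divergence satisfies sup_{S ≃ S'} D_{e^ε}(M(S) ‖ M(S')) ≤ D_{e^ε}(P ‖ Q), then for every α ∈ [0,1], inf_{S ≃ S'} T(M(S), M(S'))(α) ≥ T(P, Q)(α). -/
open MeasureTheory Real

/-- Hockey-stick divergence `D_γ(P ‖ Q) = sup_E (Q(E) - γ P(E))` over measurable sets. -/
noncomputable def hsDiv {O : Type*} [MeasurableSpace O] (γ : ℝ) (P Q : Measure O) : ℝ :=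
  sSup {x | ∃ E : Set O, MeasurableSet E ∧ x = (Q E).toReal - γ * (P E).toReal}

/-- Trade-off function `T(P,Q)(α) = inf {1 - E_Q[φ] : E_P[φ] ≤ α}` over measurable
tests `φ : O → [0,1]`. -/
noncomputable def tradeoff {O : Type*} [MeasurableSpace O] (P Q : Measure O) (α : ℝ) : ℝ :=
  sInf {β | ∃ φ : O → ℝ, Measurable φ ∧ (∀ o, 0 ≤ φ o) ∧ (∀ o, φ o ≤ 1) ∧
    (∫ o, φ o ∂P) ≤ α ∧ β = 1 - ∫ o, φ o ∂Q}

/-!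
For a test `φ` and `γ ≥ 0`, `E_ν φ - γ E_μ φ ≤ D_γ(μ ‖ ν)`, so a test of `(M S, M S')` of size
`α` and power `w` satisfies `w ≤ γ α + D_γ(P ‖ Q)` for every `γ ≥ 0`. Conversely, writing
`q = dQ/d(P + Q)`, the Neyman–Pearson lemma shows that `D_γ(P ‖ Q)` is attained by every test that
accepts `{q > t}` and rejects `{q < t}`, `t = γ / (1 + γ)`; choosing `t` as a quantile of `q` under
`P` and randomizing on `{q = t}` gives such a test of size exactly `α`, whose power is then
`γ α + D_γ(P ‖ Q) ≥ w`. The quantile `t = 1` (infinite likelihood ratio) forces `α = 0` and is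
reached as the limit `γ → ∞`.
-/

namespace HockeyStick

variable {O : Type*} [MeasurableSpace O] {μ ν : Measure O}

structure IsTest (φ : O → ℝ) : Prop where
  measurable : Measurable φ
  nonneg : ∀ x, 0 ≤ φ x
  le_one : ∀ x, φ x ≤ 1

lemma IsTest.norm_le_one {φ : O → ℝ} (hφ : IsTest φ) (x : O) : ‖φ x‖ ≤ 1 := by
  rw [Real.norm_eq_abs, abs_le]
  exact ⟨by linarith [hφ.nonneg x], hφ.le_one x⟩

lemma IsTest.integrable {φ : O → ℝ} (hφ : IsTest φ) (μ : Measure O) [IsFiniteMeasure μ] :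
    Integrable φ μ :=
  (integrable_const (1 : ℝ)).mono' hφ.measurable.aestronglyMeasurable (ae_of_all _ hφ.norm_le_one)

lemma IsTest.integral_le_one {φ : O → ℝ} (hφ : IsTest φ) (μ : Measure O) [IsProbabilityMeasure μ] :
    ∫ x, φ x ∂μ ≤ 1 := by
  simpa using integral_mono (hφ.integrable μ) (integrable_const 1) hφ.le_one

lemma isTest_indicator_one {s : Set O} (hs : MeasurableSet s) : IsTest (s.indicator 1) :=
  ⟨measurable_one.indicator hs, Set.indicator_nonneg fun _ _ => zero_le_one,
    Set.indicator_le_self' fun _ _ => zero_le_one⟩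

lemma isTest_one : IsTest (1 : O → ℝ) :=
  ⟨measurable_const, fun _ => zero_le_one, fun _ => le_rfl⟩

lemma exists_isTest_integral_eq [IsFiniteMeasure μ] {A B : Set O} (hA : MeasurableSet A)
    (hB : MeasurableSet B) (hAB : A ⊆ B) {w : ℝ} (hAw : μ.real A ≤ w) (hBw : w ≤ μ.real B) :
    ∃ φ, IsTest φ ∧ (∀ x ∈ A, φ x = 1) ∧ (∀ x ∉ B, φ x = 0) ∧ ∫ x, φ x ∂μ = w := by
  obtain ⟨c, ⟨hc0, hc1⟩, hc⟩ :
      ∃ c ∈ Set.Icc (0 : ℝ) 1, (1 - c) * μ.real A + c * μ.real B = w := by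
    simpa [segment_eq_image] using Icc_subset_segment ⟨hAw, hBw⟩
  have hAt := isTest_indicator_one hA
  have hBt := isTest_indicator_one hB
  refine ⟨fun x => (1 - c) * A.indicator 1 x + c * B.indicator 1 x, ⟨?_, fun x => ?_, fun x => ?_⟩,
    fun x hx => ?_, fun x hx => ?_, ?_⟩
  · exact (hAt.measurable.const_mul _).add (hBt.measurable.const_mul _)
  · nlinarith [hAt.nonneg x, hBt.nonneg x]
  · nlinarith [hAt.le_one x, hBt.le_one x, hAt.nonneg x, hBt.nonneg x]
  · simp [hx, hAB hx]
  · simp [hx, show x ∉ A from fun h => hx (hAB h)]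
  · rw [integral_add ((hAt.integrable μ).const_mul _) ((hBt.integrable μ).const_mul _),
      integral_const_mul, integral_const_mul, integral_indicator_one hA,
      integral_indicator_one hB, hc]

section LevelSets

variable [IsFiniteMeasure μ] {f : O → ℝ}

lemma measureReal_setOf_lt_le_of_forall_lt {t w : ℝ}
    (h : ∀ s, t < s → μ.real {x | s < f x} ≤ w) : μ.real {x | t < f x} ≤ w := by
  have hw : 0 ≤ w := measureReal_nonneg.trans (h (t + 1) (by linarith))
  have hunion : {x | t < f x} = ⋃ n : ℕ, {x | t + 1 / (n + 1) < f x} := by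
    ext x
    simp only [Set.mem_ofPred_eq, Set.mem_iUnion]
    refine ⟨fun hx => ?_, fun ⟨n, hn⟩ => lt_trans (by simp; positivity) hn⟩
    obtain ⟨n, hn⟩ := exists_nat_one_div_lt (sub_pos.2 hx)
    exact ⟨n, by linarith⟩
  have hmono : Monotone fun n : ℕ => {x | t + 1 / ((n : ℝ) + 1) < f x} := fun n m hnm x hx =>
    lt_of_le_of_lt (show t + 1 / ((m : ℝ) + 1) ≤ t + 1 / ((n : ℝ) + 1) by gcongr) hx
  rw [measureReal_def, hunion, hmono.measure_iUnion]
  refine ENNReal.toReal_le_of_le_ofReal hw (iSup_le fun n => ?_)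
  exact (ENNReal.le_ofReal_iff_toReal_le (measure_ne_top _ _) hw).2 (h _ (by simp; positivity))

lemma le_measureReal_setOf_le_of_forall_lt (hf : Measurable f) {t w : ℝ}
    (h : ∀ s < t, w ≤ μ.real {x | s < f x}) : w ≤ μ.real {x | t ≤ f x} := by
  have hinter : {x | t ≤ f x} = ⋂ n : ℕ, {x | t - 1 / (n + 1) < f x} := by
    ext x
    simp only [Set.mem_ofPred_eq, Set.mem_iInter]
    refine ⟨fun hx n => lt_of_lt_of_le (by simp; positivity) hx, fun hx => ?_⟩
    by_contra! hlt
    obtain ⟨n, hn⟩ := exists_nat_one_div_lt (sub_pos.2 hlt)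
    linarith [hx n]
  have hanti : Antitone fun n : ℕ => {x | t - 1 / ((n : ℝ) + 1) < f x} := fun n m hnm x hx =>
    lt_of_le_of_lt (show t - 1 / ((n : ℝ) + 1) ≤ t - 1 / ((m : ℝ) + 1) by gcongr) hx
  rw [measureReal_def, hinter, hanti.measure_iInter
    (fun n => (measurableSet_lt measurable_const hf).nullMeasurableSet) ⟨0, measure_ne_top _ _⟩]
  refine (ENNReal.ofReal_le_iff_le_toReal
    (ne_top_of_le_ne_top (measure_ne_top μ _) (iInf_le (fun n : ℕ => μ _) 0))).1
    (le_iInf fun n => ?_)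
  exact ENNReal.ofReal_le_of_le_toReal (h _ (by simp; positivity))

lemma exists_measureReal_lt_le_le_measureReal_le (hf : Measurable f) {a b w : ℝ} (hab : a ≤ b)
    (ha : w ≤ μ.real {x | a ≤ f x}) (hb : μ.real {x | b < f x} ≤ w) :
    ∃ t ∈ Set.Icc a b, μ.real {x | t < f x} ≤ w ∧ w ≤ μ.real {x | t ≤ f x} := by
  have antitone_lt : ∀ s s', s ≤ s' → μ.real {x | s' < f x} ≤ μ.real {x | s < f x} :=
    fun s s' hss' => measureReal_mono fun x hx => lt_of_le_of_lt hss' hx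
  set S := {s ∈ Set.Icc a b | μ.real {x | s < f x} ≤ w}
  have hbS : b ∈ S := ⟨⟨hab, le_rfl⟩, hb⟩
  have hSbdd : BddBelow S := ⟨a, fun s hs => hs.1.1⟩
  refine ⟨sInf S, ⟨le_csInf ⟨b, hbS⟩ fun s hs => hs.1.1, csInf_le hSbdd hbS⟩,
    measureReal_setOf_lt_le_of_forall_lt fun s hs => ?_,
    le_measureReal_setOf_le_of_forall_lt hf fun s hs => ?_⟩
  · obtain ⟨s', hs'S, hs's⟩ := exists_lt_of_csInf_lt ⟨b, hbS⟩ hs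
    exact (antitone_lt _ _ hs's.le).trans hs'S.2
  · by_contra! hlt
    rcases le_or_gt a s with has | hsa
    · exact (csInf_le hSbdd ⟨⟨has, hs.le.trans (csInf_le hSbdd hbS)⟩, hlt.le⟩).not_gt hs
    · exact (ha.trans (measureReal_mono fun x hx => lt_of_lt_of_le hsa hx)).not_gt hlt

end LevelSets

/-- The density `dν/d(μ + ν)`; a threshold `t` on it is the threshold `t / (1 - t)` on the
likelihood ratio `dν/dμ`. -/
noncomputable def mixDensity (μ ν : Measure O) (x : O) : ℝ :=
  (ν.rnDeriv (μ + ν) x).toReal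

structure IsNeymanPearsonTest (μ ν : Measure O) (t : ℝ) (φ : O → ℝ) : Prop extends IsTest φ where
  eq_one : ∀ x, t < mixDensity μ ν x → φ x = 1
  eq_zero : ∀ x, mixDensity μ ν x < t → φ x = 0

lemma mixDensity_nonneg (x : O) : 0 ≤ mixDensity μ ν x :=
  ENNReal.toReal_nonneg

lemma measurable_mixDensity : Measurable (mixDensity μ ν) :=
  (Measure.measurable_rnDeriv _ _).ennreal_toReal

lemma isNeymanPearsonTest_indicator (t : ℝ) :
    IsNeymanPearsonTest μ ν t ({x | t < mixDensity μ ν x}.indicator 1) where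
  toIsTest := isTest_indicator_one (measurableSet_lt measurable_const measurable_mixDensity)
  eq_one x hx := Set.indicator_of_mem (show x ∈ {x | t < mixDensity μ ν x} from hx) _
  eq_zero _ hx := Set.indicator_of_notMem (s := {x | t < mixDensity μ ν x}) (lt_asymm hx) _

section NeymanPearson

variable [IsFiniteMeasure μ] [IsFiniteMeasure ν]

lemma integral_sub_mul_integral_add_eq {ψ : O → ℝ} (hψ : IsTest ψ) (t : ℝ) :
    ∫ x, ψ x ∂ν - t * ∫ x, ψ x ∂(μ + ν) = ∫ x, (mixDensity μ ν x - t) * ψ x ∂(μ + ν) := by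
  have hac : ν ≪ μ + ν := Measure.absolutelyContinuous_of_le (Measure.le_add_left le_rfl)
  have hint : Integrable (fun x => mixDensity μ ν x * ψ x) (μ + ν) :=
    (integrable_rnDeriv_smul_iff hac).2 (hψ.integrable ν)
  simp_rw [sub_mul]
  rw [integral_sub hint ((hψ.integrable _).const_mul t), integral_const_mul]
  congr 1
  exact (integral_rnDeriv_smul hac).symm

/-- **Neyman–Pearson lemma.** -/
lemma integral_sub_mul_integral_add_le {ψ φ : O → ℝ} (hψ : IsTest ψ) {t : ℝ}
    (hφ : IsNeymanPearsonTest μ ν t φ) :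
    ∫ x, ψ x ∂ν - t * ∫ x, ψ x ∂(μ + ν) ≤ ∫ x, φ x ∂ν - t * ∫ x, φ x ∂(μ + ν) := by
  have hint : ∀ {χ : O → ℝ}, IsTest χ →
      Integrable (fun x => (mixDensity μ ν x - t) * χ x) (μ + ν) := fun hχ =>
    ((Measure.integrable_toReal_rnDeriv).sub (integrable_const t)).mul_bdd
      hχ.measurable.aestronglyMeasurable (ae_of_all _ hχ.norm_le_one)
  rw [integral_sub_mul_integral_add_eq hψ, integral_sub_mul_integral_add_eq hφ.toIsTest]
  refine integral_mono (hint hψ) (hint hφ.toIsTest) fun x => ?_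
  rcases lt_trichotomy (mixDensity μ ν x) t with hlt | heq | hgt
  · simp only [hφ.eq_zero x hlt, mul_zero]; nlinarith [hψ.nonneg x]
  · simp [heq]
  · simp only [hφ.eq_one x hgt, mul_one]; nlinarith [hψ.le_one x]

lemma measureReal_setOf_one_le_mixDensity : μ.real {x | 1 ≤ mixDensity μ ν x} = 0 := by
  set E := {x | 1 ≤ mixDensity μ ν x}
  have hE : MeasurableSet E := measurableSet_le measurable_const measurable_mixDensity
  have hnonneg : 0 ≤ ∫ x, (mixDensity μ ν x - 1) * E.indicator 1 x ∂(μ + ν) :=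
    integral_nonneg fun x => by
      by_cases hx : x ∈ E
      · rw [Set.indicator_of_mem hx, Pi.one_apply, mul_one]
        exact sub_nonneg.2 hx
      · simp [hx]
  rw [← integral_sub_mul_integral_add_eq (isTest_indicator_one hE), integral_indicator_one hE,
    integral_indicator_one hE, measureReal_add_apply] at hnonneg
  linarith [measureReal_nonneg (μ := μ) (s := E)]

end NeymanPearson

section HockeyStickDivergence

variable [IsFiniteMeasure μ] [IsFiniteMeasure ν] {γ : ℝ}

lemma integral_sub_mul_integral_eq (hγ : 0 ≤ γ) {ψ : O → ℝ} (hψ : IsTest ψ) :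
    ∫ x, ψ x ∂ν - γ * ∫ x, ψ x ∂μ
      = (1 + γ) * (∫ x, ψ x ∂ν - γ / (1 + γ) * ∫ x, ψ x ∂(μ + ν)) := by
  rw [integral_add_measure (hψ.integrable μ) (hψ.integrable ν)]
  field_simp
  ring

lemma integral_sub_mul_integral_le (hγ : 0 ≤ γ) {ψ φ : O → ℝ} (hψ : IsTest ψ)
    (hφ : IsNeymanPearsonTest μ ν (γ / (1 + γ)) φ) :
    ∫ x, ψ x ∂ν - γ * ∫ x, ψ x ∂μ ≤ ∫ x, φ x ∂ν - γ * ∫ x, φ x ∂μ := by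
  rw [integral_sub_mul_integral_eq hγ hψ, integral_sub_mul_integral_eq hγ hφ.toIsTest]
  exact mul_le_mul_of_nonneg_left (integral_sub_mul_integral_add_le hψ hφ) (by linarith)

lemma hsDiv_eq_integral_sub (hγ : 0 ≤ γ) {φ : O → ℝ}
    (hφ : IsNeymanPearsonTest μ ν (γ / (1 + γ)) φ) :
    hsDiv γ μ ν = ∫ x, φ x ∂ν - γ * ∫ x, φ x ∂μ := by
  have hset : ∀ {E : Set O}, MeasurableSet E →
      ν.real E - γ * μ.real E = ∫ x, E.indicator 1 x ∂ν - γ * ∫ x, E.indicator 1 x ∂μ :=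
    fun hE => by rw [integral_indicator_one hE, integral_indicator_one hE]
  have hbound : ∀ y ∈ {y | ∃ E, MeasurableSet E ∧ y = ν.real E - γ * μ.real E},
      y ≤ ∫ x, φ x ∂ν - γ * ∫ x, φ x ∂μ := by
    rintro _ ⟨E, hE, rfl⟩
    rw [hset hE]
    exact integral_sub_mul_integral_le hγ (isTest_indicator_one hE) hφ
  set A := {x | γ / (1 + γ) < mixDensity μ ν x}
  have hA : MeasurableSet A := measurableSet_lt measurable_const measurable_mixDensity
  have hφA : ∫ x, φ x ∂ν - γ * ∫ x, φ x ∂μ = ν.real A - γ * μ.real A := by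
    rw [hset hA]
    exact le_antisymm
      (integral_sub_mul_integral_le hγ hφ.toIsTest (isNeymanPearsonTest_indicator _))
      (integral_sub_mul_integral_le hγ (isTest_indicator_one hA) hφ)
  exact le_antisymm (csSup_le ⟨_, A, hA, rfl⟩ hbound) (le_csSup ⟨_, hbound⟩ ⟨A, hA, hφA⟩)

lemma integral_le_mul_integral_add_hsDiv (hγ : 0 ≤ γ) {ψ : O → ℝ} (hψ : IsTest ψ) :
    ∫ x, ψ x ∂ν ≤ γ * ∫ x, ψ x ∂μ + hsDiv γ μ ν := by
  rw [hsDiv_eq_integral_sub hγ (isNeymanPearsonTest_indicator _)]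
  linarith [integral_sub_mul_integral_le hγ hψ (isNeymanPearsonTest_indicator (μ := μ) (ν := ν) _)]

lemma hsDiv_zero : hsDiv 0 μ ν = ν.real Set.univ := by
  have hone : IsNeymanPearsonTest μ ν (0 / (1 + 0)) 1 :=
    ⟨isTest_one, fun _ _ => rfl, fun x hx => absurd hx (by simpa using mixDensity_nonneg x)⟩
  simpa using hsDiv_eq_integral_sub le_rfl hone

end HockeyStickDivergence

lemma exists_nonneg_div_one_add_eq {t : ℝ} (ht0 : 0 ≤ t) (ht1 : t < 1) :
    ∃ γ : ℝ, 0 ≤ γ ∧ γ / (1 + γ) = t :=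
  ⟨t / (1 - t), div_nonneg ht0 (by linarith), by
    have : 1 - t ≠ 0 := by linarith
    field_simp; ring⟩

theorem exists_isTest_of_forall_le_hsDiv [IsProbabilityMeasure μ] [IsProbabilityMeasure ν]
    {α w : ℝ} (hα : α ∈ Set.Icc 0 1) (h : ∀ γ, 0 ≤ γ → w ≤ γ * α + hsDiv γ μ ν) :
    ∃ φ, IsTest φ ∧ ∫ x, φ x ∂μ ≤ α ∧ w ≤ ∫ x, φ x ∂ν := by
  have hq := measurable_mixDensity (μ := μ) (ν := ν)
  have hμ1 := measureReal_setOf_one_le_mixDensity (μ := μ) (ν := ν)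
  have hμ1' : μ.real {x | 1 < mixDensity μ ν x} ≤ α :=
    ((measureReal_mono (Set.ofPred_subset_ofPred.2 fun _ => le_of_lt)).trans_eq hμ1).trans hα.1
  obtain ⟨t, ⟨ht0, ht1⟩, hlt, hle⟩ := exists_measureReal_lt_le_le_measureReal_le (μ := μ) hq
    zero_le_one (by simpa [mixDensity_nonneg] using hα.2) hμ1'
  rcases ht1.lt_or_eq with ht1 | rfl
  · obtain ⟨φ, hφ, hφ1, hφ0, hφα⟩ := exists_isTest_integral_eq
      (measurableSet_lt measurable_const hq) (measurableSet_le measurable_const hq)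
      (Set.ofPred_subset_ofPred.2 fun _ => le_of_lt) hlt hle
    obtain ⟨γ, hγ, rfl⟩ := exists_nonneg_div_one_add_eq ht0 ht1
    have hφNP : IsNeymanPearsonTest μ ν (γ / (1 + γ)) φ :=
      ⟨hφ, hφ1, fun x hx => hφ0 x (not_le.2 hx)⟩
    refine ⟨φ, hφ, hφα.le, ?_⟩
    have hhs := hsDiv_eq_integral_sub hγ hφNP
    rw [hφα] at hhs
    linarith [h γ hγ]
  · have hα0 : α = 0 := le_antisymm (hle.trans hμ1.le) hα.1
    have hE : MeasurableSet {x | 1 ≤ mixDensity μ ν x} := measurableSet_le measurable_const hq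
    refine ⟨_, isTest_indicator_one hE, by rw [integral_indicator_one hE, hμ1, hα0], ?_⟩
    rw [integral_indicator_one hE]
    refine le_measureReal_setOf_le_of_forall_lt hq fun s hs => ?_
    obtain ⟨γ, hγ, hγs⟩ := exists_nonneg_div_one_add_eq (le_max_right s 0) (max_lt hs one_pos)
    have hA : MeasurableSet {x | γ / (1 + γ) < mixDensity μ ν x} :=
      measurableSet_lt measurable_const hq
    have hw := h γ hγ
    rw [hα0, mul_zero, zero_add, hsDiv_eq_integral_sub hγ (isNeymanPearsonTest_indicator _),
      integral_indicator_one hA, integral_indicator_one hA] at hw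
    calc w ≤ ν.real {x | γ / (1 + γ) < mixDensity μ ν x} := by
          linarith [mul_nonneg hγ (measureReal_nonneg (μ := μ)
            (s := {x | γ / (1 + γ) < mixDensity μ ν x}))]
      _ ≤ ν.real {x | s < mixDensity μ ν x} :=
          measureReal_mono fun x hx => (hγs ▸ le_max_left s 0).trans_lt hx

section Tradeoff

variable {P Q : Measure O} {α : ℝ}

lemma le_tradeoff {β : ℝ} (hα : 0 ≤ α)
    (h : ∀ φ, IsTest φ → ∫ x, φ x ∂P ≤ α → β ≤ 1 - ∫ x, φ x ∂Q) : β ≤ tradeoff P Q α :=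
  le_csInf ⟨_, 0, measurable_const, fun _ => le_rfl, fun _ => zero_le_one, by simpa using hα, rfl⟩
    (by rintro _ ⟨φ, hm, h0, h1, hφα, rfl⟩; exact h φ ⟨hm, h0, h1⟩ hφα)

lemma tradeoff_le [IsProbabilityMeasure Q] {φ : O → ℝ} (hφ : IsTest φ)
    (hφα : ∫ x, φ x ∂P ≤ α) : tradeoff P Q α ≤ 1 - ∫ x, φ x ∂Q :=
  csInf_le ⟨0, by
      rintro _ ⟨ψ, hm, h0, h1, -, rfl⟩
      linarith [IsTest.integral_le_one ⟨hm, h0, h1⟩ Q]⟩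
    ⟨φ, hφ.1, hφ.2, hφ.3, hφα, rfl⟩

end Tradeoff

end HockeyStick

open HockeyStick

/-- If `(P, Q)` is a dominating pair for the mechanism `M` (with respect to
all hockey-stick divergences `D_{e^ε}`), then for every `α ∈ [0,1]` and every pair of
neighboring datasets, `T(M(S), M(S'))(α) ≥ T(P, Q)(α)`. -/
theorem dominating_pair_tradeoff_bound
    {D : Type*} {Θ O : Type*} [MeasurableSpace Θ] [MeasurableSpace O]
    (M : D → Measure Θ) (hM : ∀ S, IsProbabilityMeasure (M S))
    (Neighbor : D → D → Prop)
    (P Q : Measure O) [IsProbabilityMeasure P] [IsProbabilityMeasure Q]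
    (hDom : ∀ ε : ℝ, ∀ S S', Neighbor S S' →
      hsDiv (Real.exp ε) (M S) (M S') ≤ hsDiv (Real.exp ε) P Q)
    (α : ℝ) (hα : α ∈ Set.Icc (0 : ℝ) 1)
    (S S' : D) (hN : Neighbor S S') :
    tradeoff (M S) (M S') α ≥ tradeoff P Q α := by
  have := hM S
  have := hM S'
  have hDom' : ∀ γ, 0 ≤ γ → hsDiv γ (M S) (M S') ≤ hsDiv γ P Q := by
    intro γ hγ
    rcases hγ.eq_or_lt with rfl | hγ
    · simp [hsDiv_zero]
    · simpa [Real.exp_log hγ] using hDom (Real.log γ) S S' hN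
  refine le_tradeoff hα.1 fun φ hφ hφα => ?_
  obtain ⟨ψ, hψ, hψα, hψw⟩ := exists_isTest_of_forall_le_hsDiv (μ := P) (ν := Q) hα fun γ hγ =>
    (integral_le_mul_integral_add_hsDiv hγ hφ).trans
      (add_le_add (mul_le_mul_of_nonneg_left hφα hγ) (hDom' γ hγ))
  linarith [tradeoff_le (P := P) (Q := Q) hψ hψα]
end

section
/- For the Gaussian mechanism with sensitivity Δ₂ and noise standard deviation σ, setting μ = Δ₂/σ, the trade-off function is f(α) = Φ(Φ⁻¹(1-α) - μ), where Φ is the standard normal CDF. That is, for the hypothesis test between N(0, σ²) and N(Δ₂, σ²), the minimal FNR at FPR level α equals Φ(Φ⁻¹(1-α) - Δ₂/σ). -/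
/-!
The likelihood ratio of `N(Δ, σ²)` to `N(0, σ²)` is increasing in `x`, so every likelihood
ratio test is a threshold test `x > c`. By the Neyman–Pearson lemma the threshold test whose
type I error is `α` is most powerful at level `α`; choosing `c = σ t` with `Φ(t) = 1 - α`,
its type II error is `N(Δ, σ²)(x ≤ σ t) = Φ(t - Δ/σ)`.
-/

open MeasureTheory ProbabilityTheory

/-- Standard normal CDF `Φ`. -/
noncomputable def stdNormalCDF (t : ℝ) : ℝ :=
  ((gaussianReal 0 1) (Set.Iic t)).toReal

open scoped NNReal

lemma likelihoodRatioTest_mul_nonneg {φ χ p q k : ℝ} (hφ0 : 0 ≤ φ) (hφ1 : φ ≤ 1)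
    (hχ1 : k * p < q → χ = 1) (hχ0 : q < k * p → χ = 0) :
    0 ≤ (χ - φ) * (q - k * p) := by
  rcases lt_trichotomy (k * p) q with hlt | heq | hgt
  · exact mul_nonneg (by linarith [hχ1 hlt]) (by linarith)
  · simp [heq]
  · exact mul_nonneg_of_nonpos_of_nonpos (by linarith [hχ0 hgt]) (by linarith)

/-- The Neyman–Pearson lemma, for a null and an alternative with densities `p` and `q`
with respect to `ν`. -/
theorem integral_mul_le_of_likelihoodRatioTest {O : Type*} [MeasurableSpace O] {ν : Measure O}
    {p q φ χ : O → ℝ} {k : ℝ} (hk : 0 ≤ k)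
    (hp : Integrable p ν) (hq : Integrable q ν)
    (hφ : Measurable φ) (hφ0 : ∀ x, 0 ≤ φ x) (hφ1 : ∀ x, φ x ≤ 1)
    (hχ : Measurable χ) (hχ_bdd : ∀ x, ‖χ x‖ ≤ 1)
    (hχ1 : ∀ x, k * p x < q x → χ x = 1) (hχ0 : ∀ x, q x < k * p x → χ x = 0)
    (hsize : ∫ x, p x * φ x ∂ν ≤ ∫ x, p x * χ x ∂ν) :
    ∫ x, q x * φ x ∂ν ≤ ∫ x, q x * χ x ∂ν := by
  have hφ_bdd : ∀ᵐ x ∂ν, ‖φ x‖ ≤ 1 :=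
    ae_of_all _ fun x => abs_le.mpr ⟨by linarith [hφ0 x], hφ1 x⟩
  have hpχ := hp.mul_bdd hχ.aestronglyMeasurable (ae_of_all _ hχ_bdd)
  have hqχ := hq.mul_bdd hχ.aestronglyMeasurable (ae_of_all _ hχ_bdd)
  have hpφ := hp.mul_bdd hφ.aestronglyMeasurable hφ_bdd
  have hqφ := hq.mul_bdd hφ.aestronglyMeasurable hφ_bdd
  have hnonneg : 0 ≤ ∫ x, (χ x - φ x) * (q x - k * p x) ∂ν :=
    integral_nonneg fun x => likelihoodRatioTest_mul_nonneg (hφ0 x) (hφ1 x) (hχ1 x) (hχ0 x)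
  have hexpand : ∫ x, (χ x - φ x) * (q x - k * p x) ∂ν
      = (∫ x, q x * χ x ∂ν - ∫ x, q x * φ x ∂ν)
        - k * (∫ x, p x * χ x ∂ν - ∫ x, p x * φ x ∂ν) := by
    have hpointwise : (fun x => (χ x - φ x) * (q x - k * p x))
        = fun x => (q x * χ x - q x * φ x) - k * (p x * χ x - p x * φ x) := by
      ext x; ring
    have hq_diff : Integrable (fun x => q x * χ x - q x * φ x) ν := hqχ.sub hqφ
    have hp_diff : Integrable (fun x => k * (p x * χ x - p x * φ x)) ν :=
      (hpχ.sub hpφ).const_mul k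
    rw [hpointwise, integral_sub hq_diff hp_diff, integral_sub hqχ hqφ, integral_const_mul,
      integral_sub hpχ hpφ]
  nlinarith [mul_nonneg hk (sub_nonneg.mpr hsize)]

lemma tradeoff_eq_of_mostPowerful {O : Type*} [MeasurableSpace O] {P Q : Measure O} {α : ℝ}
    {χ : O → ℝ} (hχ : Measurable χ) (hχ0 : ∀ o, 0 ≤ χ o) (hχ1 : ∀ o, χ o ≤ 1)
    (hχP : ∫ o, χ o ∂P ≤ α)
    (hmost : ∀ φ : O → ℝ, Measurable φ → (∀ o, 0 ≤ φ o) → (∀ o, φ o ≤ 1) →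
      ∫ o, φ o ∂P ≤ α → ∫ o, φ o ∂Q ≤ ∫ o, χ o ∂Q) :
    tradeoff P Q α = 1 - ∫ o, χ o ∂Q := by
  refine IsLeast.csInf_eq ⟨⟨χ, hχ, hχ0, hχ1, hχP, rfl⟩, ?_⟩
  rintro _ ⟨φ, hφ, hφ0, hφ1, hφP, rfl⟩
  linarith [hmost φ hφ hφ0 hφ1 hφP]

/-- Monotone likelihood ratio of the Gaussian location family. -/
lemma gaussianPDFReal_mul_le_mul {m₀ m₁ : ℝ} (hm : m₀ ≤ m₁) (v : ℝ≥0) {c x : ℝ} (hcx : c ≤ x) :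
    gaussianPDFReal m₁ v c * gaussianPDFReal m₀ v x
      ≤ gaussianPDFReal m₁ v x * gaussianPDFReal m₀ v c := by
  simp only [gaussianPDFReal]
  rw [mul_mul_mul_comm, mul_mul_mul_comm _ (Real.exp _)]
  refine mul_le_mul_of_nonneg_left ?_ (by positivity)
  rw [← Real.exp_add, ← Real.exp_add, Real.exp_le_exp, ← add_div, ← add_div]
  exact div_le_div_of_nonneg_right (by nlinarith) (by positivity)

lemma gaussianReal_real_Iic (m : ℝ) {σ : ℝ} (hσ : 0 < σ) (s : ℝ) :
    (gaussianReal m (σ ^ 2).toNNReal).real (Set.Iic s) = stdNormalCDF ((s - m) / σ) := by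
  have hstd : ((gaussianReal m (σ ^ 2).toNNReal).map (· - m)).map (· / σ) = gaussianReal 0 1 := by
    rw [gaussianReal_map_sub_const, gaussianReal_map_div_const, sub_self, zero_div]
    congr 1
    ext
    simp [sq_nonneg, hσ.ne']
  have hpre : (fun x => x / σ) ∘ (fun x => x - m) ⁻¹' Set.Iic ((s - m) / σ) = Set.Iic s := by
    ext x
    simp [div_le_div_iff_of_pos_right hσ]
  rw [stdNormalCDF, ← hstd, Measure.map_map (by fun_prop) (by fun_prop),
    Measure.map_apply (by fun_prop) measurableSet_Iic, hpre, measureReal_def]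

lemma integral_indicator_Ioi_one {μ : Measure ℝ} [IsProbabilityMeasure μ] (c : ℝ) :
    ∫ x, (Set.Ioi c).indicator 1 x ∂μ = 1 - μ.real (Set.Iic c) := by
  rw [integral_indicator_one measurableSet_Ioi, ← Set.compl_Iic,
    probReal_compl_eq_one_sub measurableSet_Iic]

theorem integral_le_integral_indicator_Ioi_gaussianReal {m₀ m₁ : ℝ} (hm : m₀ ≤ m₁) {v : ℝ≥0}
    (hv : v ≠ 0) (c : ℝ) {φ : ℝ → ℝ} (hφ : Measurable φ) (hφ0 : ∀ x, 0 ≤ φ x)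
    (hφ1 : ∀ x, φ x ≤ 1)
    (hsize : ∫ x, φ x ∂gaussianReal m₀ v ≤ ∫ x, (Set.Ioi c).indicator 1 x ∂gaussianReal m₀ v) :
    ∫ x, φ x ∂gaussianReal m₁ v ≤ ∫ x, (Set.Ioi c).indicator 1 x ∂gaussianReal m₁ v := by
  set p := gaussianPDFReal m₀ v
  set q := gaussianPDFReal m₁ v
  have hpc : 0 < p c := gaussianPDFReal_pos _ _ _ hv
  simp only [integral_gaussianReal_eq_integral_smul hv, smul_eq_mul] at hsize ⊢
  refine integral_mul_le_of_likelihoodRatioTest (k := q c / p c)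
    (div_nonneg (gaussianPDFReal_nonneg _ _ _) hpc.le) (integrable_gaussianPDFReal _ _)
    (integrable_gaussianPDFReal _ _) hφ hφ0 hφ1 (measurable_one.indicator measurableSet_Ioi)
    (fun x => ?_) (fun x hx => ?_) (fun x hx => ?_) hsize
  · by_cases hx : x ∈ Set.Ioi c <;> simp [hx]
  · refine Set.indicator_of_mem (not_le.mp fun hxc => hx.not_ge ?_) _
    rw [div_mul_eq_mul_div, le_div_iff₀ hpc]
    exact gaussianPDFReal_mul_le_mul hm v hxc
  · refine Set.indicator_of_notMem (fun hxc : c < x => hx.not_ge ?_) _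
    rw [div_mul_eq_mul_div, div_le_iff₀ hpc]
    exact gaussianPDFReal_mul_le_mul hm v hxc.le

theorem gaussian_tradeoff_general
    (Δ σ : ℝ) (hΔ : 0 < Δ) (hσ : 0 < σ)
    (α : ℝ)
    (t : ℝ) (ht : stdNormalCDF t = 1 - α) :
    tradeoff (gaussianReal 0 ((σ ^ 2).toNNReal) : Measure ℝ)
        (gaussianReal Δ ((σ ^ 2).toNNReal) : Measure ℝ) α
      = stdNormalCDF (t - Δ / σ) := by
  have hv : (σ ^ 2).toNNReal ≠ 0 := (Real.toNNReal_pos.mpr (by positivity)).ne'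
  have hsize : ∫ x, (Set.Ioi (σ * t)).indicator 1 x ∂gaussianReal 0 (σ ^ 2).toNNReal = α := by
    rw [integral_indicator_Ioi_one, gaussianReal_real_Iic 0 hσ, sub_zero,
      mul_div_cancel_left₀ t hσ.ne', ht, sub_sub_cancel]
  have hpower : ∫ x, (Set.Ioi (σ * t)).indicator 1 x ∂gaussianReal Δ (σ ^ 2).toNNReal
      = 1 - stdNormalCDF (t - Δ / σ) := by
    rw [integral_indicator_Ioi_one, gaussianReal_real_Iic Δ hσ, sub_div,
      mul_div_cancel_left₀ t hσ.ne']
  rw [tradeoff_eq_of_mostPowerful (measurable_one.indicator measurableSet_Ioi)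
      (fun _ => Set.indicator_nonneg (fun _ _ => zero_le_one) _)
      (fun _ => Set.indicator_le_self' (fun _ _ => zero_le_one) _) hsize.le
      (fun φ hφ hφ0 hφ1 hφP => integral_le_integral_indicator_Ioi_gaussianReal hΔ.le hv _
        hφ hφ0 hφ1 (hsize ▸ hφP)),
    hpower, sub_sub_cancel]

/-- For the Gaussian mechanism with sensitivity `Δ₂` and noise standard
deviation `σ`, setting `μ = Δ₂/σ`, the trade-off function between `N(0, σ²)` and
`N(Δ₂, σ²)` is `f(α) = Φ(Φ⁻¹(1-α) - μ)`: if `t` satisfies `Φ(t) = 1 - α` then the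
minimal FNR at FPR level `α` equals `Φ(t - Δ₂/σ)`. -/
theorem gaussian_tradeoff
    (Δ σ : ℝ) (hΔ : 0 < Δ) (hσ : 0 < σ)
    (α : ℝ) (hα : α ∈ Set.Icc (0 : ℝ) 1)
    (t : ℝ) (ht : stdNormalCDF t = 1 - α) :
    tradeoff (gaussianReal 0 ((σ ^ 2).toNNReal) : Measure ℝ)
        (gaussianReal Δ ((σ ^ 2).toNNReal) : Measure ℝ) α
      = stdNormalCDF (t - Δ / σ) :=
  gaussian_tradeoff_general Δ σ hΔ hσ α t ht
end

section
/- For any two probability measures P and Q, the trade-off functions satisfy the inversion identity: for all α ∈ [0,1], T(Q, P)(α) = T(P, Q)⁻¹(α), where the inverse is defined as f⁻¹(α) = inf{t ∈ [0,1] : f(t) ≤ α}. -/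
open MeasureTheory

/-- The inverse of a trade-off function: `f⁻¹(α) = inf {t ∈ [0,1] : f(t) ≤ α}`. -/
noncomputable def tradeoffInv (f : ℝ → ℝ) (α : ℝ) : ℝ :=
  sInf {t | t ∈ Set.Icc (0 : ℝ) 1 ∧ f t ≤ α}

open Filter Topology
open scoped ENNReal

/-!
A test `φ` of `Q` against `P` with `E_Q φ ≤ α` and `1 - E_P φ = t` turns into the test `1 - φ`
of `P` against `Q` with `E_P (1 - φ) = t` and `1 - E_Q (1 - φ) ≤ α`; this gives
`T(P,Q)⁻¹(α) ≤ T(Q,P)(α)`. Conversely, if `T(P,Q)(t) ≤ α`, complementing near-optimal tests shows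
`T(Q,P)(β) ≤ t` for every `β > α`, and it remains to pass to `β = α`. For `α > 0` this follows
from shrinking tests by the factor `α / β`. For `α = 0` a Borel–Cantelli argument shows that
`T(P,Q)(t) = 0` is attained: if `E_Q (1 - φₙ) ≤ 2⁻ⁿ` then `φₙ → 1` `Q`-a.e., and by Fatou
`liminf φₙ` is a test of `P`-level at most `t`.
-/

section

variable {O : Type*}

/-- Taken in `ℝ≥0∞`, where Fatou's lemma lives. -/
noncomputable def liminfTest (φ : ℕ → O → ℝ) (o : O) : ℝ :=
  (liminf (fun n => ENNReal.ofReal (φ n o)) atTop).toReal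

lemma liminfTest_eq_one {φ : ℕ → O → ℝ} {o : O} (h : Tendsto (fun n => φ n o) atTop (𝓝 1)) :
    liminfTest φ o = 1 := by
  have h' := ENNReal.tendsto_ofReal h
  rw [ENNReal.ofReal_one] at h'
  simp [liminfTest, h'.liminf_eq]

variable [MeasurableSpace O]

structure IsTest (φ : O → ℝ) : Prop where
  measurable : Measurable φ
  nonneg : ∀ o, 0 ≤ φ o
  le_one : ∀ o, φ o ≤ 1

lemma isTest_const {c : ℝ} (h0 : 0 ≤ c) (h1 : c ≤ 1) : IsTest fun _ : O => c :=
  ⟨measurable_const, fun _ => h0, fun _ => h1⟩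

namespace IsTest

variable {φ : O → ℝ}

lemma one_sub (hφ : IsTest φ) : IsTest fun o => 1 - φ o :=
  ⟨measurable_const.sub hφ.measurable, fun o => sub_nonneg.2 (hφ.le_one o),
    fun o => sub_le_self 1 (hφ.nonneg o)⟩

lemma const_mul (hφ : IsTest φ) {c : ℝ} (h0 : 0 ≤ c) (h1 : c ≤ 1) : IsTest fun o => c * φ o :=
  ⟨hφ.measurable.const_mul c, fun o => mul_nonneg h0 (hφ.nonneg o),
    fun o => mul_le_one₀ h1 (hφ.nonneg o) (hφ.le_one o)⟩

lemma integrable (hφ : IsTest φ) (μ : Measure O) [IsFiniteMeasure μ] : Integrable φ μ :=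
  (integrable_const 1).mono' hφ.measurable.aestronglyMeasurable <| .of_forall fun o => by
    rw [Real.norm_eq_abs, abs_le]
    exact ⟨by linarith [hφ.nonneg o], hφ.le_one o⟩

lemma integral_nonneg (hφ : IsTest φ) (μ : Measure O) : 0 ≤ ∫ o, φ o ∂μ :=
  MeasureTheory.integral_nonneg hφ.nonneg

lemma integral_le_one (hφ : IsTest φ) (μ : Measure O) [IsProbabilityMeasure μ] :
    ∫ o, φ o ∂μ ≤ 1 := by
  simpa using integral_mono (hφ.integrable μ) (integrable_const 1) hφ.le_one

lemma integral_one_sub (hφ : IsTest φ) (μ : Measure O) [IsProbabilityMeasure μ] :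
    ∫ o, 1 - φ o ∂μ = 1 - ∫ o, φ o ∂μ := by
  simp [integral_sub (integrable_const 1) (hφ.integrable μ)]

end IsTest

lemma ae_tendsto_zero_of_tsum_lintegral_ne_top {X : Type*} [MeasurableSpace X] {μ : Measure X}
    {f : ℕ → X → ℝ≥0∞} (hf : ∀ n, AEMeasurable (f n) μ) (h : ∑' n, ∫⁻ x, f n x ∂μ ≠ ∞) :
    ∀ᵐ x ∂μ, Tendsto (fun n => f n x) atTop (𝓝 0) := by
  rw [← lintegral_tsum hf] at h
  filter_upwards [ae_lt_top' (AEMeasurable.tsum hf) h] with x hx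
  exact ENNReal.tendsto_atTop_zero_of_tsum_ne_top hx.ne

section LiminfTest

variable {φ : ℕ → O → ℝ}

lemma liminf_ofReal_le_one (hφ : ∀ n, IsTest (φ n)) (o : O) :
    liminf (fun n => ENNReal.ofReal (φ n o)) atTop ≤ 1 :=
  (liminf_le_liminf (.of_forall fun n => ENNReal.ofReal_le_one.2 ((hφ n).le_one o))).trans_eq
    (liminf_const 1)

lemma isTest_liminfTest (hφ : ∀ n, IsTest (φ n)) : IsTest (liminfTest φ) :=
  ⟨(Measurable.liminf fun n => (hφ n).measurable.ennreal_ofReal).ennreal_toReal,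
    fun _ => ENNReal.toReal_nonneg,
    fun o => ENNReal.toReal_le_of_le_ofReal zero_le_one (by simpa using liminf_ofReal_le_one hφ o)⟩

lemma integral_liminfTest_le {μ : Measure O} [IsFiniteMeasure μ] {t : ℝ}
    (hφ : ∀ n, IsTest (φ n)) (ht : 0 ≤ t) (h : ∀ n, ∫ o, φ n o ∂μ ≤ t) :
    ∫ o, liminfTest φ o ∂μ ≤ t := by
  have hmeas n : Measurable fun o => ENNReal.ofReal (φ n o) := (hφ n).measurable.ennreal_ofReal
  simp only [liminfTest]
  rw [integral_toReal (Measurable.liminf hmeas).aemeasurable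
    (.of_forall fun o => (liminf_ofReal_le_one hφ o).trans_lt ENNReal.one_lt_top)]
  refine ENNReal.toReal_le_of_le_ofReal ht ((lintegral_liminf_le hmeas).trans ?_)
  refine (liminf_le_liminf (.of_forall fun n => ?_)).trans_eq (liminf_const _)
  rw [← ofReal_integral_eq_lintegral_ofReal ((hφ n).integrable μ) (.of_forall (hφ n).nonneg)]
  exact ENNReal.ofReal_le_ofReal (h n)

end LiminfTest

section Tradeoff

variable {P Q : Measure O} {φ : O → ℝ} {α β t : ℝ}

lemma tradeoff_le [IsProbabilityMeasure Q] (hφ : IsTest φ) (hP : ∫ o, φ o ∂P ≤ α) :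
    tradeoff P Q α ≤ 1 - ∫ o, φ o ∂Q := by
  refine csInf_le ⟨0, ?_⟩ ⟨φ, hφ.measurable, hφ.nonneg, hφ.le_one, hP, rfl⟩
  rintro _ ⟨ψ, hm, h0, h1, -, rfl⟩
  exact sub_nonneg.2 (IsTest.integral_le_one ⟨hm, h0, h1⟩ Q)

lemma exists_test_of_tradeoff_lt (hα : 0 ≤ α) (h : tradeoff P Q α < β) :
    ∃ φ, IsTest φ ∧ ∫ o, φ o ∂P ≤ α ∧ 1 - ∫ o, φ o ∂Q < β := by
  have hne : {β | ∃ φ : O → ℝ, Measurable φ ∧ (∀ o, 0 ≤ φ o) ∧ (∀ o, φ o ≤ 1) ∧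
      ∫ o, φ o ∂P ≤ α ∧ β = 1 - ∫ o, φ o ∂Q}.Nonempty :=
    ⟨_, fun _ => 0, measurable_const, fun _ => le_rfl, fun _ => zero_le_one, by simpa using hα, rfl⟩
  obtain ⟨_, ⟨φ, hm, h0, h1, hP, rfl⟩, hlt⟩ := exists_lt_of_csInf_lt hne h
  exact ⟨φ, ⟨hm, h0, h1⟩, hP, hlt⟩

lemma tradeoff_swap_le [IsProbabilityMeasure P] [IsProbabilityMeasure Q] (hφ : IsTest φ)
    (h : 1 - ∫ o, φ o ∂Q ≤ β) : tradeoff Q P β ≤ ∫ o, φ o ∂P := by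
  have := tradeoff_le (P := Q) (Q := P) (α := β) hφ.one_sub (by rwa [hφ.integral_one_sub Q])
  rwa [hφ.integral_one_sub P, sub_sub_cancel] at this

lemma tradeoff_le_tradeoff_add [IsProbabilityMeasure Q] (hα : 0 < α) (hαβ : α ≤ β) :
    tradeoff P Q α ≤ tradeoff P Q β + (1 - α / β) := by
  have hβ : 0 < β := hα.trans_le hαβ
  have hc0 : 0 ≤ α / β := (div_pos hα hβ).le
  have hc1 : α / β ≤ 1 := (div_le_one hβ).2 hαβ
  rw [← sub_le_iff_le_add]
  refine le_of_forall_gt fun γ hγ => ?_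
  obtain ⟨φ, hφ, hP, hQ⟩ := exists_test_of_tradeoff_lt hβ.le hγ
  have hscaled := tradeoff_le (P := P) (Q := Q) (α := α) (hφ.const_mul hc0 hc1) <| by
    rw [integral_const_mul]
    calc α / β * ∫ o, φ o ∂P ≤ α / β * β := mul_le_mul_of_nonneg_left hP hc0
      _ = α := div_mul_cancel₀ α hβ.ne'
  rw [integral_const_mul] at hscaled
  nlinarith [hφ.integral_le_one Q]

lemma tradeoff_le_of_forall_gt [IsProbabilityMeasure Q] (hα : 0 < α)
    (h : ∀ β > α, tradeoff P Q β ≤ t) : tradeoff P Q α ≤ t := by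
  have hlim : Tendsto (fun β => t + (1 - α / β)) (𝓝[>] α) (𝓝 t) := by
    have hcont : ContinuousAt (fun β => t + (1 - α / β)) α := by
      fun_prop (disch := exact hα.ne')
    simpa [div_self hα.ne'] using hcont.tendsto.mono_left nhdsWithin_le_nhds
  refine ge_of_tendsto hlim (eventually_nhdsWithin_of_forall fun β hβ => ?_)
  exact (tradeoff_le_tradeoff_add hα hβ.le).trans (by linarith [h β hβ])

lemma exists_test_integral_eq_one_of_tradeoff_nonpos [IsFiniteMeasure P]
    [IsProbabilityMeasure Q] (ht : 0 ≤ t) (h : tradeoff P Q t ≤ 0) :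
    ∃ φ, IsTest φ ∧ ∫ o, φ o ∂P ≤ t ∧ ∫ o, φ o ∂Q = 1 := by
  have hseq (n : ℕ) : ∃ φ, IsTest φ ∧ ∫ o, φ o ∂P ≤ t ∧ 1 - ∫ o, φ o ∂Q < (1 / 2) ^ n :=
    exists_test_of_tradeoff_lt ht (h.trans_lt (by positivity))
  choose φ hφ hP hQ using hseq
  have hlint (n : ℕ) :
      ∫⁻ o, ENNReal.ofReal (1 - φ n o) ∂Q ≤ ENNReal.ofReal ((1 / 2) ^ n) := by
    rw [← ofReal_integral_eq_lintegral_ofReal ((hφ n).one_sub.integrable Q)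
      (.of_forall (hφ n).one_sub.nonneg), (hφ n).integral_one_sub]
    exact ENNReal.ofReal_le_ofReal (hQ n).le
  have hsum : ∑' n, ∫⁻ o, ENNReal.ofReal (1 - φ n o) ∂Q ≠ ∞ := by
    refine ne_top_of_le_ne_top ?_ (ENNReal.tsum_le_tsum hlint)
    rw [← ENNReal.ofReal_tsum_of_nonneg (fun n => by positivity) summable_geometric_two]
    exact ENNReal.ofReal_ne_top
  have hae : ∀ᵐ o ∂Q, liminfTest φ o = 1 := by
    filter_upwards [ae_tendsto_zero_of_tsum_lintegral_ne_top
      (fun n => (hφ n).one_sub.measurable.ennreal_ofReal.aemeasurable) hsum] with o ho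
    refine liminfTest_eq_one ?_
    have hgap := (ENNReal.tendsto_toReal_iff (fun n => ENNReal.ofReal_ne_top)
      ENNReal.zero_ne_top).2 ho
    simp only [ENNReal.toReal_ofReal ((hφ _).one_sub.nonneg o), ENNReal.toReal_zero] at hgap
    simpa using hgap.const_sub 1
  refine ⟨liminfTest φ, isTest_liminfTest hφ, integral_liminfTest_le hφ ht hP, ?_⟩
  simp [integral_congr_ae hae]

lemma tradeoff_swap_le_of_tradeoff_le [IsProbabilityMeasure P] [IsProbabilityMeasure Q]
    (ht : 0 ≤ t) (hα : 0 ≤ α) (h : tradeoff P Q t ≤ α) : tradeoff Q P α ≤ t := by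
  rcases hα.eq_or_lt with rfl | hα
  · obtain ⟨φ, hφ, hP, hQ⟩ := exists_test_integral_eq_one_of_tradeoff_nonpos ht h
    exact (tradeoff_swap_le hφ (by rw [hQ, sub_self])).trans hP
  · refine tradeoff_le_of_forall_gt hα fun β hβ => ?_
    obtain ⟨φ, hφ, hP, hQ⟩ := exists_test_of_tradeoff_lt ht (h.trans_lt hβ)
    exact (tradeoff_swap_le hφ hQ.le).trans hP

end Tradeoff

section TradeoffInv

variable {f : ℝ → ℝ} {α b t : ℝ}

lemma tradeoffInv_le (ht : t ∈ Set.Icc (0 : ℝ) 1) (h : f t ≤ α) : tradeoffInv f α ≤ t :=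
  csInf_le ⟨0, fun _ hs => hs.1.1⟩ ⟨ht, h⟩

lemma le_tradeoffInv (hne : ∃ t ∈ Set.Icc (0 : ℝ) 1, f t ≤ α)
    (h : ∀ t ∈ Set.Icc (0 : ℝ) 1, f t ≤ α → b ≤ t) : b ≤ tradeoffInv f α :=
  le_csInf hne fun t ht => h t ht.1 ht.2

end TradeoffInv

end

/-- For any probability measures `P` and `Q`, the trade-off functions
satisfy the inversion identity `T(Q, P)(α) = T(P, Q)⁻¹(α)` for all `α ∈ [0,1]`. -/
theorem tradeoff_inversion
    {O : Type*} [MeasurableSpace O] (P Q : Measure O)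
    [IsProbabilityMeasure P] [IsProbabilityMeasure Q]
    (α : ℝ) (hα : α ∈ Set.Icc (0 : ℝ) 1) :
    tradeoff Q P α = tradeoffInv (tradeoff P Q) α := by
  have hα0 : 0 ≤ α := hα.1
  have hone : tradeoff P Q 1 ≤ α :=
    calc tradeoff P Q 1 ≤ ∫ _, (0 : ℝ) ∂Q :=
          tradeoff_swap_le (isTest_const le_rfl zero_le_one) (by simp)
      _ = 0 := integral_zero O ℝ
      _ ≤ α := hα0
  apply le_antisymm
  · exact le_tradeoffInv ⟨1, ⟨zero_le_one, le_rfl⟩, hone⟩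
      fun t ht htα => tradeoff_swap_le_of_tradeoff_le ht.1 hα0 htα
  · refine le_of_forall_gt fun β hβ => ?_
    obtain ⟨ψ, hψ, hψQ, hψP⟩ := exists_test_of_tradeoff_lt hα0 hβ
    have hlevel : 1 - ∫ o, ψ o ∂P ∈ Set.Icc (0 : ℝ) 1 :=
      ⟨sub_nonneg.2 (hψ.integral_le_one P), sub_le_self 1 (hψ.integral_nonneg P)⟩
    exact (tradeoffInv_le hlevel ((tradeoff_swap_le hψ le_rfl).trans hψQ)).trans_lt hψP
end
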